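/- Let 2 < p < ∞, q = 2(p−1)², k ∈ ℕ, and ρ ∈ ℝ^k with ρ₁ ≥ ρ₂ ≥ ⋯ ≥ ρ_k > 0. For 0 ≤ β < β* := 2/(q ρ₁²) = 1/((p−1)² ρ₁²), define f_{ρ,β}(x) = ∑_{j=1}^k x_j²/ρ_j² − β ‖x‖_p². Then f_{ρ,β} is a non-negative convex function on ℝ^k. -/

import Mathlib

/-!
Non-negativity: `‖x‖_p ≤ ‖x‖₂ ≤ ρ₁ √(∑ x_j²/ρ_j²)` because `ρ_j ≤ ρ₁`.

Convexity: a continuous midpoint-convex function is convex, and since `Q x = ∑ x_j²/ρ_j²` obeys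
the parallelogram law, midpoint convexity `f a ≤ (f (a + b) + f (a - b)) / 2` reduces to the
2-uniform smoothness of `ℓᵖ`,
`‖a + b‖_p² + ‖a - b‖_p² ≤ 2‖a‖_p² + 2(p - 1)‖b‖_p²`,
together with `2(p - 1)β‖b‖_p² ≤ 2(p - 1)βρ₁² Q b ≤ 2 Q b`.
Smoothness follows from the scalar two-point inequality
`|a + b|ᵖ + |a - b|ᵖ ≤ 2(a² + (p - 1)b²)^{p/2}`, summed over coordinates, by concavity of
`s ↦ s^{2/p}` and Minkowski's inequality in `ℓ^{p/2}`. After scaling to `t = b/a ∈ [0, 1]`, two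
differentiations in `t` reduce the two-point inequality for `p` to that for `p - 2`, and for
`p ≤ 4` it is the concavity of `s ↦ s^{(p-2)/2}`.
-/

open Real Set

noncomputable section

def pnormFin {k : ℕ} (p : ℝ) (x : Fin k → ℝ) : ℝ := (∑ j, |x j| ^ p) ^ (1 / p)

lemma monotoneOn_Icc_of_hasDerivAt_nonneg {f f' : ℝ → ℝ} {a b : ℝ}
    (hf : ∀ x, HasDerivAt f (f' x) x) (hf' : ∀ x ∈ Ioo a b, 0 ≤ f' x) :
    MonotoneOn f (Icc a b) :=
  monotoneOn_of_hasDerivWithinAt_nonneg (convex_Icc a b)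
    (fun x _ => (hf x).continuousAt.continuousWithinAt) (fun x _ => (hf x).hasDerivWithinAt)
    (by simpa only [interior_Icc] using hf')

lemma sq_rpow_div_two {a : ℝ} (ha : 0 ≤ a) (s : ℝ) : (a ^ 2) ^ (s / 2) = a ^ s := by
  rw [← rpow_natCast_mul ha]
  norm_num [mul_div_cancel₀]

lemma one_add_rpow_add_one_sub_rpow_le_of_le_two {s t : ℝ} (hs₀ : 0 ≤ s) (hs₂ : s ≤ 2)
    (ht : t ∈ Icc (-1 : ℝ) 1) :
    (1 + t) ^ s + (1 - t) ^ s ≤ 2 * (1 + t ^ 2) ^ (s / 2) := by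
  have hconc := (concaveOn_rpow (p := s / 2) (by positivity) (by linarith)).2
    (sq_nonneg (1 + t)) (sq_nonneg (1 - t)) (by norm_num : (0 : ℝ) ≤ 1 / 2)
    (by norm_num : (0 : ℝ) ≤ 1 / 2) (by norm_num)
  simp only [smul_eq_mul] at hconc
  rw [sq_rpow_div_two (by linarith [ht.1]), sq_rpow_div_two (by linarith [ht.2]),
    show (1 / 2 : ℝ) * (1 + t) ^ 2 + 1 / 2 * (1 - t) ^ 2 = 1 + t ^ 2 by ring] at hconc
  linarith

lemma one_add_rpow_sub_one_sub_rpow_le {p : ℝ} (hp : 2 ≤ p)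
    (hinner : ∀ t ∈ Icc (0 : ℝ) 1,
      (1 + t) ^ (p - 2) + (1 - t) ^ (p - 2) ≤ 2 * (1 + (p - 1) * t ^ 2) ^ (p / 2 - 1))
    {t : ℝ} (ht : t ∈ Icc (0 : ℝ) 1) :
    (1 + t) ^ (p - 1) - (1 - t) ^ (p - 1) ≤
      2 * (p - 1) * t * (1 + (p - 1) * t ^ 2) ^ (p / 2 - 1) := by
  have hR : ∀ t : ℝ, 0 < 1 + (p - 1) * t ^ 2 := fun t => by nlinarith [sq_nonneg t]
  have hderiv : ∀ t : ℝ, HasDerivAt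
      (fun t => 2 * (p - 1) * t * (1 + (p - 1) * t ^ 2) ^ (p / 2 - 1)
        - ((1 + t) ^ (p - 1) - (1 - t) ^ (p - 1)))
      (2 * (p - 1) * ((1 + (p - 1) * t ^ 2) ^ (p / 2 - 1)
          + (p - 1) * (p - 2) * t ^ 2 * (1 + (p - 1) * t ^ 2) ^ (p / 2 - 2))
        - (p - 1) * ((1 + t) ^ (p - 2) + (1 - t) ^ (p - 2))) t := by
    intro t
    refine ((((hasDerivAt_id t).const_mul (2 * (p - 1))).mul
      (((hasDerivAt_pow 2 t).const_mul (p - 1)).const_add 1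
        |>.rpow_const (Or.inl (hR t).ne'))).sub
      ((((hasDerivAt_id t).const_add 1).rpow_const (Or.inr (by linarith))).sub
        (((hasDerivAt_id t).const_sub 1).rpow_const (Or.inr (by linarith))))).congr_deriv ?_
    rw [show p / 2 - 1 - 1 = p / 2 - 2 by ring, show p - 1 - 1 = p - 2 by ring]
    simp only [id]
    ring
  have hmono := monotoneOn_Icc_of_hasDerivAt_nonneg hderiv fun s hs => by
    have hextra : 0 ≤ (p - 1) * (p - 2) * s ^ 2 * (1 + (p - 1) * s ^ 2) ^ (p / 2 - 2) := by
      have := rpow_nonneg (hR s).le (p / 2 - 2)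
      have : 0 ≤ (p - 1) * (p - 2) := mul_nonneg (by linarith) (by linarith)
      positivity
    nlinarith [hinner s (Ioo_subset_Icc_self hs)]
  have := hmono (left_mem_Icc.2 zero_le_one) ht ht.1
  simp only [mul_zero, zero_mul, add_zero, sub_zero, sub_self, one_rpow] at this
  linarith

lemma one_add_rpow_add_one_sub_rpow_le_of_inner {p : ℝ} (hp : 2 ≤ p)
    (hinner : ∀ t ∈ Icc (0 : ℝ) 1,
      (1 + t) ^ (p - 2) + (1 - t) ^ (p - 2) ≤ 2 * (1 + (p - 1) * t ^ 2) ^ (p / 2 - 1))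
    {t : ℝ} (ht : t ∈ Icc (0 : ℝ) 1) :
    (1 + t) ^ p + (1 - t) ^ p ≤ 2 * (1 + (p - 1) * t ^ 2) ^ (p / 2) := by
  have hR : ∀ t : ℝ, 0 < 1 + (p - 1) * t ^ 2 := fun t => by nlinarith [sq_nonneg t]
  have hderiv : ∀ t : ℝ, HasDerivAt
      (fun t => 2 * (1 + (p - 1) * t ^ 2) ^ (p / 2) - ((1 + t) ^ p + (1 - t) ^ p))
      (p * (2 * (p - 1) * t * (1 + (p - 1) * t ^ 2) ^ (p / 2 - 1)
        - ((1 + t) ^ (p - 1) - (1 - t) ^ (p - 1)))) t := fun t =>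
    (((((hasDerivAt_pow 2 t).const_mul (p - 1)).const_add 1).rpow_const
      (Or.inl (hR t).ne')).const_mul 2 |>.sub
      ((((hasDerivAt_id t).const_add 1).rpow_const (Or.inr (by linarith))).add
        (((hasDerivAt_id t).const_sub 1).rpow_const (Or.inr (by linarith))))).congr_deriv
      (by simp only [id]; push_cast; ring)
  have hmono := monotoneOn_Icc_of_hasDerivAt_nonneg hderiv fun s hs =>
    mul_nonneg (by linarith)
      (sub_nonneg.2 (one_add_rpow_sub_one_sub_rpow_le hp hinner (Ioo_subset_Icc_self hs)))
  have := hmono (left_mem_Icc.2 zero_le_one) ht ht.1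
  norm_num at this
  linarith

lemma one_add_rpow_add_one_sub_rpow_le {p t : ℝ} (hp : 2 ≤ p) (ht : t ∈ Icc (0 : ℝ) 1) :
    (1 + t) ^ p + (1 - t) ^ p ≤ 2 * (1 + (p - 1) * t ^ 2) ^ (p / 2) := by
  obtain ⟨n, hn⟩ := exists_nat_ge p
  replace hn : p ≤ 2 * n + 4 := by linarith [n.cast_nonneg (α := ℝ)]
  induction n generalizing p t with
  | zero =>
    refine one_add_rpow_add_one_sub_rpow_le_of_inner hp (fun s hs => ?_) ht
    have hbase := one_add_rpow_add_one_sub_rpow_le_of_le_two (s := p - 2) (by linarith)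
      (by push_cast at hn; linarith) ⟨by linarith [hs.1], hs.2⟩
    rw [show (p - 2) / 2 = p / 2 - 1 by ring] at hbase
    refine hbase.trans ?_
    gcongr
    · linarith
    · nlinarith [hs.1]
  | succ n ih =>
    rcases le_or_gt p (2 * n + 4) with hle | hgt
    · exact ih hp ht hle
    refine one_add_rpow_add_one_sub_rpow_le_of_inner hp (fun s hs => ?_) ht
    have hprev := ih (p := p - 2) (by linarith) hs (by push_cast at hn; linarith)
    rw [show (p - 2) / 2 = p / 2 - 1 by ring, show p - 2 - 1 = p - 3 by ring] at hprev
    refine hprev.trans ?_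
    gcongr
    · nlinarith [hs.1]
    · linarith
    · nlinarith [hs.1]

lemma add_rpow_add_sub_rpow_le {p a b : ℝ} (hp : 2 ≤ p) (hb : 0 ≤ b) (hba : b ≤ a) :
    (a + b) ^ p + (a - b) ^ p ≤ 2 * (a ^ 2 + (p - 1) * b ^ 2) ^ (p / 2) := by
  obtain rfl | ha := (hb.trans hba).eq_or_lt
  · obtain rfl : b = 0 := le_antisymm hba hb
    simp [zero_rpow (by linarith : p ≠ 0), zero_rpow (by linarith : p / 2 ≠ 0)]
  set t := b / a
  have ht : t ∈ Icc (0 : ℝ) 1 := ⟨div_nonneg hb ha.le, div_le_one_of_le₀ hba ha.le⟩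
  have hb' : b = a * t := by simp only [t]; field_simp
  have hR : 0 ≤ 1 + (p - 1) * t ^ 2 := by nlinarith [sq_nonneg t]
  calc (a + b) ^ p + (a - b) ^ p = a ^ p * ((1 + t) ^ p + (1 - t) ^ p) := by
        rw [hb', show a + a * t = a * (1 + t) by ring, show a - a * t = a * (1 - t) by ring,
          mul_rpow ha.le (by linarith [ht.1]), mul_rpow ha.le (by linarith [ht.2]), mul_add]
    _ ≤ a ^ p * (2 * (1 + (p - 1) * t ^ 2) ^ (p / 2)) := by
        gcongr
        exact one_add_rpow_add_one_sub_rpow_le hp ht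
    _ = 2 * (a ^ 2 + (p - 1) * b ^ 2) ^ (p / 2) := by
        rw [hb', show a ^ 2 + (p - 1) * (a * t) ^ 2 = a ^ 2 * (1 + (p - 1) * t ^ 2) by ring,
          mul_rpow (sq_nonneg a) hR, sq_rpow_div_two ha.le]
        ring

lemma abs_add_rpow_add_abs_sub_rpow_le {p : ℝ} (hp : 2 ≤ p) (a b : ℝ) :
    |a + b| ^ p + |a - b| ^ p ≤ 2 * (a ^ 2 + (p - 1) * b ^ 2) ^ (p / 2) := by
  wlog ha : 0 ≤ a generalizing a
  · have := this (-a) (by linarith)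
    rwa [neg_sq, show -a + b = -(a - b) by ring, show -a - b = -(a + b) by ring, abs_neg,
      abs_neg, add_comm] at this
  wlog hb : 0 ≤ b generalizing b
  · have := this (-b) (by linarith)
    rwa [neg_sq, ← sub_eq_add_neg, sub_neg_eq_add, add_comm] at this
  wlog hba : b ≤ a generalizing a b
  · calc |a + b| ^ p + |a - b| ^ p = |b + a| ^ p + |b - a| ^ p := by
          rw [add_comm a, abs_sub_comm]
      _ ≤ 2 * (b ^ 2 + (p - 1) * a ^ 2) ^ (p / 2) := this b hb a ha (by linarith)
      _ ≤ 2 * (a ^ 2 + (p - 1) * b ^ 2) ^ (p / 2) := by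
          have : b ^ 2 + (p - 1) * a ^ 2 ≤ a ^ 2 + (p - 1) * b ^ 2 := by
            nlinarith [mul_le_mul_of_nonneg_left (pow_le_pow_left₀ ha (not_le.1 hba).le 2)
              (by linarith : 0 ≤ p - 2)]
          gcongr 2 * ?_ ^ _
          nlinarith
  rw [abs_of_nonneg (by linarith), abs_of_nonneg (by linarith)]
  exact add_rpow_add_sub_rpow_le hp hb hba

lemma sum_rpow_le_rpow_sum {ι : Type*} (s : Finset ι) {f : ι → ℝ} (hf : ∀ i ∈ s, 0 ≤ f i)
    {r : ℝ} (hr : 1 ≤ r) : ∑ i ∈ s, f i ^ r ≤ (∑ i ∈ s, f i) ^ r := by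
  classical
  induction s using Finset.induction_on with
  | empty => simp [zero_rpow (by linarith : r ≠ 0)]
  | insert i s hi ih =>
    rw [Finset.sum_insert hi, Finset.sum_insert hi]
    rw [Finset.forall_mem_insert] at hf
    calc f i ^ r + ∑ j ∈ s, f j ^ r ≤ f i ^ r + (∑ j ∈ s, f j) ^ r := by gcongr; exact ih hf.2
      _ ≤ (f i + ∑ j ∈ s, f j) ^ r :=
        add_rpow_le_rpow_add hf.1 (Finset.sum_nonneg hf.2) hr

lemma sq_pnormFin {k : ℕ} (p : ℝ) (x : Fin k → ℝ) :
    pnormFin p x ^ 2 = (∑ j, |x j| ^ p) ^ (2 / p) := by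
  rw [pnormFin, ← rpow_natCast, ← rpow_mul (Finset.sum_nonneg fun j _ => by positivity)]
  congr 1
  ring

lemma sq_pnormFin_le_sum_sq {k : ℕ} {p : ℝ} (hp : 2 ≤ p) (x : Fin k → ℝ) :
    pnormFin p x ^ 2 ≤ ∑ j, x j ^ 2 := by
  have hsum : ∑ j, |x j| ^ p ≤ (∑ j, x j ^ 2) ^ (p / 2) := by
    simp_rw [← sq_rpow_div_two (abs_nonneg _), sq_abs]
    exact sum_rpow_le_rpow_sum _ (fun j _ => sq_nonneg _) (by linarith)
  rw [sq_pnormFin]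
  calc (∑ j, |x j| ^ p) ^ (2 / p) ≤ ((∑ j, x j ^ 2) ^ (p / 2)) ^ (2 / p) := by
        gcongr
    _ = ∑ j, x j ^ 2 := by
        rw [← rpow_mul (by positivity), div_mul_div_cancel₀ two_ne_zero, div_self (by linarith),
          rpow_one]

theorem sq_pnormFin_add_add_sq_pnormFin_sub_le {k : ℕ} {p : ℝ} (hp : 2 ≤ p) (a b : Fin k → ℝ) :
    pnormFin p (a + b) ^ 2 + pnormFin p (a - b) ^ 2 ≤
      2 * pnormFin p a ^ 2 + 2 * (p - 1) * pnormFin p b ^ 2 := by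
  set S : (Fin k → ℝ) → ℝ := fun z => ∑ j, |z j| ^ p
  have hS : ∀ z, 0 ≤ S z := fun z => Finset.sum_nonneg fun j _ => by positivity
  have hp1 : 0 ≤ p - 1 := by linarith
  have hexp : (1 : ℝ) / (p / 2) = 2 / p := by field_simp
  simp only [sq_pnormFin]
  have hconc := (concaveOn_rpow (p := 2 / p) (by positivity)
    (by rw [div_le_one (by linarith)]; linarith)).2 (hS (a + b)) (hS (a - b))
    (by norm_num : (0 : ℝ) ≤ 1 / 2) (by norm_num : (0 : ℝ) ≤ 1 / 2) (by norm_num)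
  simp only [smul_eq_mul] at hconc
  have hpoint : 1 / 2 * S (a + b) + 1 / 2 * S (a - b) ≤
      ∑ j, (a j ^ 2 + (p - 1) * b j ^ 2) ^ (p / 2) := by
    rw [Finset.mul_sum, Finset.mul_sum, ← Finset.sum_add_distrib]
    gcongr with j
    have := abs_add_rpow_add_abs_sub_rpow_le hp (a j) (b j)
    simp only [Pi.add_apply, Pi.sub_apply]
    linarith
  have hmink := Real.Lp_add_le_of_nonneg Finset.univ (f := fun j => a j ^ 2)
    (g := fun j => (p - 1) * b j ^ 2) (by linarith : (1 : ℝ) ≤ p / 2) (fun j _ => sq_nonneg _)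
    (fun j _ => by positivity)
  rw [hexp] at hmink
  have ha : (∑ j, (a j ^ 2) ^ (p / 2)) ^ (2 / p) = S a ^ (2 / p) := by
    simp_rw [S, ← sq_abs (a _), sq_rpow_div_two (abs_nonneg _)]
  have hb : (∑ j, ((p - 1) * b j ^ 2) ^ (p / 2)) ^ (2 / p) = (p - 1) * S b ^ (2 / p) := by
    simp_rw [S, mul_rpow hp1 (sq_nonneg _), ← sq_abs (b _), sq_rpow_div_two (abs_nonneg _),
      ← Finset.mul_sum]
    rw [mul_rpow (by positivity) (hS b), ← rpow_mul hp1, div_mul_div_cancel₀ two_ne_zero,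
      div_self (by linarith), rpow_one]
  have hpow : (1 / 2 * S (a + b) + 1 / 2 * S (a - b)) ^ (2 / p) ≤
      (∑ j, (a j ^ 2 + (p - 1) * b j ^ 2) ^ (p / 2)) ^ (2 / p) := by
    gcongr
  linarith

lemma nonpos_of_midpoint_of_nonpos_endpoints {g : ℝ → ℝ} (hg : Continuous g)
    (hmid : ∀ s h, g s ≤ (g (s + h) + g (s - h)) / 2) (h₀ : g 0 ≤ 0) (h₁ : g 1 ≤ 0) :
    ∀ u ∈ Icc (0 : ℝ) 1, g u ≤ 0 := by
  obtain ⟨u₀, hu₀, hmax⟩ :=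
    isCompact_Icc.exists_isMaxOn (nonempty_Icc.2 zero_le_one) hg.continuousOn
  intro u hu
  by_contra! hpos
  have hM : 0 < g u₀ := hpos.trans_le (hmax hu)
  -- the leftmost maximiser `m` lies in the open interval, and midpoint convexity at `m`
  -- forces a maximum further left
  obtain ⟨m, ⟨hm, hgm : g m = g u₀⟩, hleast⟩ := (isCompact_Icc.inter_right
    (isClosed_singleton.preimage hg)).exists_isLeast ⟨u₀, hu₀, rfl⟩
  have hm₀ : 0 < m := hm.1.lt_of_ne (by rintro rfl; linarith)
  have hm₁ : m < 1 := hm.2.lt_of_ne (by rintro rfl; linarith)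
  set δ := min m (1 - m)
  have hδ : 0 < δ := lt_min hm₀ (by linarith)
  have hleft : m - δ ∈ Icc (0 : ℝ) 1 := ⟨by linarith [min_le_left m (1 - m)], by linarith⟩
  have hright : m + δ ∈ Icc (0 : ℝ) 1 := ⟨by linarith, by linarith [min_le_right m (1 - m)]⟩
  have h1 : g (m + δ) ≤ g u₀ := hmax hright
  have h2 : g (m - δ) ≤ g u₀ := hmax hleft
  have := hmid m δ
  have := hleast ⟨hleft, show g (m - δ) = g u₀ by linarith⟩
  linarith

theorem convexOn_univ_of_continuous_of_midpoint {E : Type*} [AddCommGroup E] [Module ℝ E]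
    [TopologicalSpace E] [ContinuousAdd E] [ContinuousSMul ℝ E] {f : E → ℝ} (hf : Continuous f)
    (hmid : ∀ a b, f a ≤ (f (a + b) + f (a - b)) / 2) : ConvexOn ℝ univ f := by
  refine ⟨convex_univ, fun x _ y _ a b ha hb hab => ?_⟩
  set g : ℝ → ℝ := fun t => f (x + t • (y - x)) - ((1 - t) * f x + t * f y)
  have hg : Continuous g := by fun_prop
  have hgmid : ∀ s h, g s ≤ (g (s + h) + g (s - h)) / 2 := by
    intro s h
    have := hmid (x + s • (y - x)) (h • (y - x))
    simp only [g, add_smul, sub_smul, ← add_assoc, add_sub_assoc] at this ⊢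
    linarith
  have := nonpos_of_midpoint_of_nonpos_endpoints hg hgmid (by simp [g]) (by simp [g]) b
    ⟨hb, by linarith⟩
  obtain rfl : a = 1 - b := by linarith
  have hxy : x + b • (y - x) = (1 - b) • x + b • y := by module
  simp only [g, hxy, smul_eq_mul] at this ⊢
  linarith

lemma sum_sq_le_sq_mul_sum_sq_div_sq {ι : Type*} (s : Finset ι) {ρ : ι → ℝ} {R : ℝ}
    (hρ : ∀ i ∈ s, 0 < ρ i) (hR : ∀ i ∈ s, ρ i ≤ R) (x : ι → ℝ) :
    ∑ i ∈ s, x i ^ 2 ≤ R ^ 2 * ∑ i ∈ s, x i ^ 2 / ρ i ^ 2 := by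
  rw [Finset.mul_sum]
  refine Finset.sum_le_sum fun i hi => ?_
  have hρi := hρ i hi
  calc x i ^ 2 = ρ i ^ 2 * (x i ^ 2 / ρ i ^ 2) := by field_simp
    _ ≤ R ^ 2 * (x i ^ 2 / ρ i ^ 2) := by gcongr; exact hR i hi

lemma continuous_pnormFin {k : ℕ} {p : ℝ} (hp : 0 < p) : Continuous (pnormFin (k := k) p) := by
  unfold pnormFin
  exact (continuous_finsetSum _ fun j _ => (continuous_apply j).abs.rpow_const
    fun _ => Or.inr hp.le).rpow_const fun _ => Or.inr (by positivity)

/-- For `2 < p < ∞` and `0 ≤ β < 1/((p−1)² ρ₁²)`, the function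
`f_{ρ,β}(x) = ∑ x_j²/ρ_j² − β ‖x‖_p²` is non-negative and convex on `ℝᵏ`. -/
theorem f_nonneg_and_convex_gt_two (p : ℝ) (hp : 2 < p)
    (k : ℕ) (hk : 0 < k)
    (ρ : Fin k → ℝ) (hρpos : ∀ j, 0 < ρ j) (hρanti : Antitone ρ)
    (β : ℝ) (hβ0 : 0 ≤ β) (hβ : β < 1 / ((p - 1) ^ 2 * ρ ⟨0, hk⟩ ^ 2)) :
    (∀ x : Fin k → ℝ, 0 ≤ (∑ j, x j ^ 2 / ρ j ^ 2) - β * pnormFin p x ^ 2) ∧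
      ConvexOn ℝ univ
        (fun x : Fin k → ℝ => (∑ j, x j ^ 2 / ρ j ^ 2) - β * pnormFin p x ^ 2) := by
  set Q : (Fin k → ℝ) → ℝ := fun x => ∑ j, x j ^ 2 / ρ j ^ 2
  set ρ₀ := ρ ⟨0, hk⟩
  have hQ : ∀ x, 0 ≤ Q x := fun x => Finset.sum_nonneg fun j _ => by positivity
  have hbound : ∀ x, pnormFin p x ^ 2 ≤ ρ₀ ^ 2 * Q x := fun x =>
    (sq_pnormFin_le_sum_sq hp.le x).trans <| sum_sq_le_sq_mul_sum_sq_div_sq _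
      (fun j _ => hρpos j) (fun j _ => hρanti (Nat.zero_le j)) x
  have hβρ : β * (p - 1) * ρ₀ ^ 2 ≤ 1 := by
    rw [lt_div_iff₀ (mul_pos (by nlinarith) (pow_pos (hρpos _) 2))] at hβ
    nlinarith [mul_nonneg hβ0 (sq_nonneg ρ₀)]
  refine ⟨fun x => ?_, convexOn_univ_of_continuous_of_midpoint ?_ fun a b => ?_⟩
  · nlinarith [mul_le_mul_of_nonneg_left (hbound x) hβ0, hQ x]
  · exact (continuous_finsetSum _ fun j _ => by fun_prop).sub
      (continuous_const.mul ((continuous_pnormFin (by linarith)).pow 2))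
  · have hpar : Q (a + b) + Q (a - b) = 2 * Q a + 2 * Q b := by
      simp only [Q, Pi.add_apply, Pi.sub_apply, Finset.mul_sum, ← Finset.sum_add_distrib]
      exact Finset.sum_congr rfl fun j _ => by ring
    have hsmooth := sq_pnormFin_add_add_sq_pnormFin_sub_le hp.le a b
    have hβp : 0 ≤ β * (p - 1) := mul_nonneg hβ0 (by linarith)
    show Q a - _ ≤ (Q (a + b) - _ + (Q (a - b) - _)) / 2
    nlinarith [mul_le_mul_of_nonneg_left hsmooth hβ0, mul_le_mul_of_nonneg_left (hbound b) hβp,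
      mul_le_mul_of_nonneg_right hβρ (hQ b)]
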